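/- arXiv:2506.04153 — 2 statements merged into one kernel-verified Lean document; each statement's English description precedes it below -/
import Mathlib

section
/- Let g : 2πℤ³ → ℂ be summable and define ǧ(x) = Σ_{p ∈ 2πℤ³} g(p) e^{i p·x} for x in the unit torus Λ = [-1/2, 1/2]³. Suppose g extends to a function G on ℝ³ whose partial derivative ∂_{p_j}^m G exists and is integrable along lines in direction e_j. Then there is a universal constant c > 0 (independent of g, m, x) such that c^m |x_j|^m |ǧ(x)| ≤ (2π)^{m-1} ∫_0^{2πm} Σ_{p ∈ 2πℤ³} |∂_{p_j}^m G(p - s e_j)| ds, for each coordinate direction j ∈ {1,2,3} and each m ≥ 1. -/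
/-
Multiplying the Fourier series by `(e^{2πi x_j} - 1)^m` amounts, after reindexing the lattice sum,
to replacing `g` by its `m`-th backward difference in direction `e_j`, and on the torus
`|e^{2πi x_j} - 1| ≥ 4 |x_j|` (Jordan's inequality). On the line `s ↦ 2πk - s e_j` that lattice
difference is the `m`-th forward difference with step `2π` of `s ↦ G (2πk - s e_j)`, and `m`
applications of the fundamental theorem of calculus bound it by
`(2π)^{m-1} ∫_0^{2πm} |∂_j^m G (2πk - s e_j)| ds`; summing over `k` gives the claim with `c = 4`.
-/

open MeasureTheory

/-- Partial derivative of `G : ℝ³ → ℂ` in the `j`-th coordinate direction. -/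
noncomputable def pd (j : Fin 3) (G : (Fin 3 → ℝ) → ℂ) : (Fin 3 → ℝ) → ℂ :=
  fun x => fderiv ℝ G x (Pi.single j 1)

/-- The `j`-th standard basis vector of `ℝ³`. -/
def ej (j : Fin 3) : Fin 3 → ℝ := Pi.single j 1

section ForwardDifferences

variable {M : Type*} [AddCommGroup M]

theorem Summable.fwdDiff_iter {G : Type*} [AddCommGroup G] [TopologicalSpace G]
    [IsTopologicalAddGroup G] {f : M → G} (hf : Summable f) (h : M) (n : ℕ) :
    Summable ((fwdDiff h)^[n] f) := by
  induction n with
  | zero => exact hf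
  | succ n ih =>
    rw [Function.iterate_succ_apply']
    exact ((Equiv.addRight h).summable_iff.mpr ih).sub ih

theorem fwdDiff_iter_comp {N G : Type*} [AddCommMonoid N] [AddCommGroup G] {φ : M → N}
    {h : M} {h' : N} (hφ : ∀ y, φ (y + h) = φ y + h') (f : N → G) (n : ℕ) :
    (fwdDiff h)^[n] (f ∘ φ) = (fwdDiff h')^[n] f ∘ φ := by
  induction n generalizing f with
  | zero => rfl
  | succ n ih =>
    have hdiff : fwdDiff h (f ∘ φ) = fwdDiff h' f ∘ φ := by
      funext y; simp [fwdDiff, hφ]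
    rw [Function.iterate_succ_apply, hdiff, ih, ← Function.iterate_succ_apply]

end ForwardDifferences

theorem fwdDiff_iter_lattice_eq_line {ι E : Type*} [DecidableEq ι] [AddCommGroup E]
    (G : (ι → ℝ) → E) (r : ℝ) (j : ι) (n : ℕ) (k : ι → ℤ) :
    (fwdDiff (-Pi.single j 1))^[n] (fun l : ι → ℤ => G fun i => r * l i) k =
      (fwdDiff r)^[n] (fun s => G ((fun i => r * k i) - s • Pi.single j 1)) 0 := by
  have hlattice := fwdDiff_iter_comp (φ := fun (l : ι → ℤ) i => r * (l i : ℝ))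
    (h := -Pi.single j 1) (h' := -r • Pi.single j 1) (fun l => by
      funext i; simp [Pi.single_apply]; split_ifs <;> ring) G n
  have hline := fwdDiff_iter_comp (φ := fun s : ℝ => (fun i => r * (k i : ℝ)) - s • Pi.single j 1)
    (h := r) (h' := -r • Pi.single j 1) (fun s => by simp [add_smul]; abel) G n
  exact (congrFun hlattice k).trans ((congrFun hline 0).trans (by simp)).symm

section AddChar

variable {M : Type*} [AddCommGroup M] (χ : AddChar M Circle)

theorem Summable.mul_addChar {f : M → ℂ} (hf : Summable f) :
    Summable fun k => f k * χ k :=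
  hf.norm.of_norm_bounded fun k => by simp [Circle.norm_coe]

theorem tsum_fwdDiff_mul_addChar {f : M → ℂ} (hf : Summable f) (h : M) :
    ∑' k, fwdDiff h f k * χ k = ((χ (-h) : ℂ) - 1) * ∑' k, f k * χ k := by
  have hshift : ∑' k, f (k + h) * χ k = χ (-h) * ∑' k, f k * χ k := by
    rw [← tsum_mul_left, ← (Equiv.subRight h).tsum_eq]
    refine tsum_congr fun k => ?_
    simp [sub_eq_add_neg, AddChar.map_add_eq_mul, mul_left_comm, mul_comm]
  have hshiftχ : Summable fun k => f (k + h) * χ k :=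
    ((Equiv.addRight h).summable_iff.mpr hf).mul_addChar χ
  simp only [fwdDiff, sub_mul]
  rw [hshiftχ.tsum_sub (hf.mul_addChar χ), hshift, one_mul]

theorem tsum_fwdDiff_iter_mul_addChar {f : M → ℂ} (hf : Summable f) (h : M) (n : ℕ) :
    ∑' k, (fwdDiff h)^[n] f k * χ k = ((χ (-h) : ℂ) - 1) ^ n * ∑' k, f k * χ k := by
  induction n with
  | zero => simp
  | succ n ih =>
    rw [Function.iterate_succ_apply', tsum_fwdDiff_mul_addChar χ (hf.fwdDiff_iter h n), ih,
      pow_succ', mul_assoc]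

theorem norm_tsum_mul_addChar_le {f : M → ℂ} (hf : Summable f) :
    ‖∑' k, f k * χ k‖ ≤ ∑' k, ‖f k‖ :=
  (norm_tsum_le_tsum_norm (by simpa [Circle.norm_coe] using hf.norm)).trans_eq
    (tsum_congr fun k => by simp [Circle.norm_coe])

end AddChar

theorem four_mul_abs_le_norm_fourierChar_sub_one {y : ℝ} (hy : |y| ≤ 1 / 2) :
    4 * |y| ≤ ‖(Real.fourierChar y : ℂ) - 1‖ := by
  have hπy : |Real.pi * y| ≤ Real.pi / 2 := by
    rw [abs_mul, abs_of_pos Real.pi_pos]; nlinarith [Real.pi_pos]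
  have hjordan := Real.mul_abs_le_abs_sin hπy
  rw [abs_mul, abs_of_pos Real.pi_pos, div_mul_eq_mul_div, mul_div_assoc,
    mul_div_cancel_left₀ _ Real.pi_pos.ne'] at hjordan
  rw [Real.fourierChar_apply, mul_comm _ Complex.I, Complex.norm_exp_I_mul_ofReal_sub_one,
    norm_mul, Real.norm_eq_abs, Real.norm_eq_abs, abs_two,
    show 2 * Real.pi * y / 2 = Real.pi * y by ring]
  linarith

-- `latticeChar x k = e^{i p·x}` at the lattice point `p = 2πk`.
noncomputable def latticeChar {ι : Type*} [Fintype ι] (x : ι → ℝ) : AddChar (ι → ℤ) Circle :=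
  Real.fourierChar.compAddMonoidHom
    { toFun := fun k => ∑ i, (k i : ℝ) * x i
      map_zero' := by simp
      map_add' := fun k l => by simp [add_mul, Finset.sum_add_distrib] }

theorem latticeChar_apply {ι : Type*} [Fintype ι] (x : ι → ℝ) (k : ι → ℤ) :
    (latticeChar x k : ℂ) = Complex.exp (Complex.I * ↑(2 * Real.pi * ∑ i, (k i : ℝ) * x i)) := by
  rw [latticeChar, AddChar.compAddMonoidHom_apply, Real.fourierChar_apply, mul_comm]
  rfl

theorem latticeChar_single {ι : Type*} [Fintype ι] [DecidableEq ι] (x : ι → ℝ) (j : ι) :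
    latticeChar x (Pi.single j 1) = Real.fourierChar (x j) := by
  simp [latticeChar, Pi.single_apply]

section RealLine

open Set

variable {E : Type*} [NormedAddCommGroup E] [NormedSpace ℝ E]

theorem ContDiff.fwdDiff_iter {k : WithTop ℕ∞} {ψ : ℝ → E} (hψ : ContDiff ℝ k ψ) (h : ℝ)
    (n : ℕ) : ContDiff ℝ k ((fwdDiff h)^[n] ψ) := by
  induction n with
  | zero => exact hψ
  | succ n ih =>
    rw [Function.iterate_succ_apply']
    exact (ih.comp (contDiff_id.add contDiff_const)).sub ih

theorem deriv_fwdDiff_iter {ψ : ℝ → E} (hψ : Differentiable ℝ ψ) (h : ℝ) (n : ℕ) :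
    deriv ((fwdDiff h)^[n] ψ) = (fwdDiff h)^[n] (deriv ψ) := by
  induction n generalizing ψ with
  | zero => rfl
  | succ n ih =>
    have hdiff : deriv (fwdDiff h ψ) = fwdDiff h (deriv ψ) := by
      funext s
      exact (((hψ (s + h)).hasDerivAt.comp_add_const s h).sub (hψ s).hasDerivAt).deriv
    rw [Function.iterate_succ_apply, Function.iterate_succ_apply,
      ih (ψ := fwdDiff h ψ) ((hψ.comp (differentiable_id.add_const h)).sub hψ), hdiff]

theorem enorm_fwdDiff_iter_le_lintegral {n : ℕ} {ψ : ℝ → E} (hψ : ContDiff ℝ (n + 1) ψ)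
    {h : ℝ} (hh : 0 ≤ h) (a : ℝ) :
    ‖(fwdDiff h)^[n + 1] ψ a‖ₑ ≤
      ENNReal.ofReal h ^ n * ∫⁻ s in Icc a (a + (n + 1) * h), ‖iteratedDeriv (n + 1) ψ s‖ₑ := by
  induction n generalizing ψ a with
  | zero =>
    simpa [fwdDiff] using enorm_sub_le_lintegral_deriv_of_contDiffOn_Icc
      (by simpa using hψ.contDiffOn) (by linarith : a ≤ a + h)
  | succ n ih =>
    -- FTC on the outermost difference, then the induction hypothesis for `ψ'` at each point
    push_cast
    set C := ∫⁻ s in Icc a (a + (n + 1 + 1) * h), ‖iteratedDeriv (n + 1 + 1) ψ s‖ₑ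
    have hψ' : Differentiable ℝ ψ := hψ.differentiable (by simp)
    have hinner : ∀ u ∈ Icc a (a + h),
        ‖(fwdDiff h)^[n + 1] (deriv ψ) u‖ₑ ≤ ENNReal.ofReal h ^ n * C := by
      intro u hu
      refine (ih hψ.deriv' u).trans ?_
      rw [← iteratedDeriv_succ']
      gcongr
      exact lintegral_mono_set <| Icc_subset_Icc hu.1 (by nlinarith [hu.2])
    calc ‖(fwdDiff h)^[n + 1 + 1] ψ a‖ₑ
        = ‖(fwdDiff h)^[n + 1] ψ (a + h) - (fwdDiff h)^[n + 1] ψ a‖ₑ := by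
          rw [Function.iterate_succ_apply']; rfl
      _ ≤ ∫⁻ u in Icc a (a + h), ‖deriv ((fwdDiff h)^[n + 1] ψ) u‖ₑ :=
          enorm_sub_le_lintegral_deriv_of_contDiffOn_Icc
            ((hψ.of_le (by simp)).fwdDiff_iter h _).contDiffOn (by linarith)
      _ = ∫⁻ u in Icc a (a + h), ‖(fwdDiff h)^[n + 1] (deriv ψ) u‖ₑ := by
          rw [deriv_fwdDiff_iter hψ']
      _ ≤ ∫⁻ _ in Icc a (a + h), ENNReal.ofReal h ^ n * C :=
          setLIntegral_mono measurable_const hinner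
      _ = ENNReal.ofReal h ^ (n + 1) * C := by
          rw [setLIntegral_const, Real.volume_Icc, add_sub_cancel_left, pow_succ]
          ring

theorem tsum_norm_fwdDiff_iter_le {ι : Type*} [Countable ι] {n : ℕ} {Φ : ι → ℝ → E}
    (hΦ : ∀ i, ContDiff ℝ (n + 1) (Φ i)) {h : ℝ} (hh : 0 ≤ h) (a : ℝ)
    (hsum : ∀ s, Summable fun i => ‖iteratedDeriv (n + 1) (Φ i) s‖)
    (hint : IntervalIntegrable (fun s => ∑' i, ‖iteratedDeriv (n + 1) (Φ i) s‖) volume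
      a (a + (n + 1) * h)) :
    ∑' i, ‖(fwdDiff h)^[n + 1] (Φ i) a‖ ≤
      h ^ n * ∫ s in a..a + (n + 1) * h, ∑' i, ‖iteratedDeriv (n + 1) (Φ i) s‖ := by
  have hle : a ≤ a + (n + 1) * h := by nlinarith
  have hmeas : ∀ i, Measurable fun s => ‖iteratedDeriv (n + 1) (Φ i) s‖ₑ := fun i =>
    ((hΦ i).continuous_iteratedDeriv _ le_rfl).enorm.measurable
  have hlint : ∫⁻ s in Icc a (a + (n + 1) * h), ∑' i, ‖iteratedDeriv (n + 1) (Φ i) s‖ₑ =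
      ENNReal.ofReal (∫ s in a..a + (n + 1) * h, ∑' i, ‖iteratedDeriv (n + 1) (Φ i) s‖) := by
    rw [intervalIntegral.integral_of_le hle, ofReal_integral_eq_lintegral_ofReal hint.1
      (Filter.Eventually.of_forall fun s => tsum_nonneg fun i => norm_nonneg _),
      restrict_Ioc_eq_restrict_Icc]
    refine lintegral_congr fun s => ?_
    rw [ENNReal.ofReal_tsum_of_nonneg (fun i => norm_nonneg _) (hsum s)]
    simp only [ofReal_norm]
  -- In `ℝ≥0∞` the sum over `i` commutes with the integral without integrability conditions.
  have hbound : ∑' i, ‖(fwdDiff h)^[n + 1] (Φ i) a‖ₑ ≤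
      ENNReal.ofReal (h ^ n * ∫ s in a..a + (n + 1) * h, ∑' i, ‖iteratedDeriv (n + 1) (Φ i) s‖) :=
    calc ∑' i, ‖(fwdDiff h)^[n + 1] (Φ i) a‖ₑ
        ≤ ∑' i, ENNReal.ofReal h ^ n *
            ∫⁻ s in Icc a (a + (n + 1) * h), ‖iteratedDeriv (n + 1) (Φ i) s‖ₑ :=
          ENNReal.tsum_le_tsum fun i => enorm_fwdDiff_iter_le_lintegral (hΦ i) hh a
      _ = _ := by
          rw [ENNReal.tsum_mul_left, ← lintegral_tsum fun i => (hmeas i).aemeasurable, hlint,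
            ENNReal.ofReal_mul (pow_nonneg hh n), ENNReal.ofReal_pow hh]
  calc ∑' i, ‖(fwdDiff h)^[n + 1] (Φ i) a‖
      = (∑' i, ‖(fwdDiff h)^[n + 1] (Φ i) a‖ₑ).toReal := by
        rw [ENNReal.tsum_toReal_eq fun i => enorm_ne_top]
        simp only [toReal_enorm]
    _ ≤ _ := ENNReal.toReal_le_of_le_ofReal (mul_nonneg (pow_nonneg hh n)
        (intervalIntegral.integral_nonneg hle fun s _ => tsum_nonneg fun i => norm_nonneg _))
        hbound

end RealLine

section LineDerivatives

variable {F E : Type*} [NormedAddCommGroup F] [NormedSpace ℝ F] [NormedAddCommGroup E]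
  [NormedSpace ℝ E]

theorem deriv_comp_sub_smul {G : F → E} (hG : Differentiable ℝ G) (c v : F) :
    deriv (fun t : ℝ => G (c - t • v)) = fun t => -fderiv ℝ G (c - t • v) v := by
  funext t
  have hline : HasDerivAt (fun t : ℝ => c - t • v) (-v) t := by
    simpa using ((hasDerivAt_id t).smul_const v).const_sub c
  exact ((hG _).hasFDerivAt.comp_hasDerivAt t hline).deriv.trans (map_neg _ v)

theorem iteratedDeriv_comp_sub_smul {n : ℕ} {G : F → E} (hG : ContDiff ℝ n G) (c v : F)
    (s : ℝ) :
    iteratedDeriv n (fun t : ℝ => G (c - t • v)) s =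
      (-1 : ℝ) ^ n • (fun H x => fderiv ℝ H x v)^[n] G (c - s • v) := by
  induction n generalizing G with
  | zero => simp
  | succ n ih =>
    have hDG : ContDiff ℝ n fun x => fderiv ℝ G x v :=
      (hG.fderiv_right (by push_cast; rfl)).clm_apply contDiff_const
    rw [iteratedDeriv_succ', deriv_comp_sub_smul (hG.differentiable (by simp)),
      iteratedDeriv_fun_neg, ih hDG, Function.iterate_succ_apply, pow_succ, mul_smul,
      neg_one_smul, smul_neg]

theorem norm_iteratedDeriv_comp_sub_smul {n : ℕ} {G : F → E} (hG : ContDiff ℝ n G) (c v : F)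
    (s : ℝ) :
    ‖iteratedDeriv n (fun t : ℝ => G (c - t • v)) s‖ =
      ‖(fun H x => fderiv ℝ H x v)^[n] G (c - s • v)‖ := by
  rw [iteratedDeriv_comp_sub_smul hG, norm_smul, norm_pow, norm_neg, norm_one, one_pow, one_mul]

end LineDerivatives

/-- Fourier-series decay from momentum-space derivatives: there is a universal
constant `c > 0` such that, for any summable `g : 2πℤ³ → ℂ`, any `C^m` extension
`G` of `g` to `ℝ³` whose `m`-th partial derivatives along direction `e_j` are
summable over the shifted lattice and integrable in the shift, any `m ≥ 1`,
`j ∈ {1,2,3}` and `x` in the unit torus,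
`c^m |x_j|^m |ǧ(x)| ≤ (2π)^{m-1} ∫_0^{2πm} ∑_p |∂_{p_j}^m G(p - s e_j)| ds`. -/
theorem fourier_decay_from_derivatives :
    ∃ c : ℝ, 0 < c ∧
      ∀ (g : (Fin 3 → ℤ) → ℂ) (G : (Fin 3 → ℝ) → ℂ) (m : ℕ) (j : Fin 3)
        (x : Fin 3 → ℝ),
        Summable g →
        (∀ k : Fin 3 → ℤ, G (fun i => 2 * Real.pi * (k i : ℝ)) = g k) →
        ContDiff ℝ m G →
        1 ≤ m →
        (∀ i, x i ∈ Set.Icc (-(1:ℝ)/2) (1/2)) →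
        (∀ s : ℝ, Summable (fun k : Fin 3 → ℤ =>
          ‖(pd j)^[m] G ((fun i => 2 * Real.pi * (k i : ℝ)) - s • ej j)‖)) →
        IntervalIntegrable (fun s : ℝ => ∑' k : Fin 3 → ℤ,
            ‖(pd j)^[m] G ((fun i => 2 * Real.pi * (k i : ℝ)) - s • ej j)‖)
          volume 0 (2 * Real.pi * m) →
        c^m * |x j|^m *
            ‖∑' k : Fin 3 → ℤ, g k *
              Complex.exp (Complex.I * ((2 * Real.pi * ∑ i, (k i : ℝ) * x i : ℝ) : ℂ))‖
          ≤ (2 * Real.pi)^(m - 1) *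
            ∫ s in (0:ℝ)..(2 * Real.pi * m), ∑' k : Fin 3 → ℤ,
              ‖(pd j)^[m] G ((fun i => 2 * Real.pi * (k i : ℝ)) - s • ej j)‖ := by
  refine ⟨4, by norm_num, fun g G m j x hg hGg hG hm hx hsum hint => ?_⟩
  obtain ⟨n, rfl⟩ := Nat.exists_eq_add_of_le' hm
  set χ := latticeChar x
  set e : Fin 3 → ℤ := Pi.single j 1
  set Φ : (Fin 3 → ℤ) → ℝ → ℂ := fun k s => G ((fun i => 2 * Real.pi * (k i : ℝ)) - s • ej j)
  have hdiff : ∀ k, (fwdDiff (-e))^[n + 1] g k = (fwdDiff (2 * Real.pi))^[n + 1] (Φ k) 0 := by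
    rw [show g = fun l => G fun i => 2 * Real.pi * (l i : ℝ) from funext fun l => (hGg l).symm]
    exact fwdDiff_iter_lattice_eq_line G _ j _
  have hline : ∀ (k : Fin 3 → ℤ) s,
      ‖(pd j)^[n + 1] G ((fun i => 2 * Real.pi * (k i : ℝ)) - s • ej j)‖ =
        ‖iteratedDeriv (n + 1) (Φ k) s‖ := fun k s =>
    (norm_iteratedDeriv_comp_sub_smul hG _ _ s).symm
  simp only [hline] at hsum hint ⊢
  rw [show 2 * Real.pi * ((n + 1 : ℕ) : ℝ) = 0 + (n + 1) * (2 * Real.pi) by push_cast; ring]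
    at hint ⊢
  have hΦ : ∀ k, ContDiff ℝ (n + 1) (Φ k) := fun k =>
    hG.comp (contDiff_const.sub (contDiff_id.smul contDiff_const))
  have hxj : |x j| ≤ 1 / 2 := abs_le.2 ⟨by linarith [(hx j).1], (hx j).2⟩
  calc 4 ^ (n + 1) * |x j| ^ (n + 1) *
        ‖∑' k : Fin 3 → ℤ, g k *
          Complex.exp (Complex.I * ((2 * Real.pi * ∑ i, (k i : ℝ) * x i : ℝ) : ℂ))‖
      = (4 * |x j|) ^ (n + 1) * ‖∑' k, g k * χ k‖ := by
        simp only [mul_pow, latticeChar_apply, χ]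
    _ ≤ ‖(χ e : ℂ) - 1‖ ^ (n + 1) * ‖∑' k, g k * χ k‖ := by
        gcongr
        rw [latticeChar_single]
        exact four_mul_abs_le_norm_fourierChar_sub_one hxj
    _ = ‖∑' k, (fwdDiff (-e))^[n + 1] g k * χ k‖ := by
        rw [tsum_fwdDiff_iter_mul_addChar χ hg, neg_neg, norm_mul, norm_pow]
    _ ≤ ∑' k, ‖(fwdDiff (2 * Real.pi))^[n + 1] (Φ k) 0‖ := by
        simpa only [hdiff] using norm_tsum_mul_addChar_le χ (hg.fwdDiff_iter (-e) (n + 1))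
    _ ≤ _ := by
        rw [Nat.add_sub_cancel]
        exact tsum_norm_fwdDiff_iter_le hΦ Real.two_pi_pos.le 0 hsum hint
end

section
/- Let η, σ : 2πℤ³ → ℝ with |η_p| ≤ C N^κ |p|^{-2} 1(|p| ≥ N^{κ/2}) and |σ_q| ≤ C N^κ |q|^{-2} 1(|q| ≥ N^{κ/2-β/4}), and define A_{p,q} = N^{-1/2}·2p²η_p σ_q/(p²+q²+(p+q)²) as above. Then for every q ∈ 2πℤ³ \ {0}, Σ_{p ∈ 2πℤ³} |A_{p, -p-q}| ≤ C' N^{2κ - 1/2} |q|^{-1}. -/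
/-- The Euclidean norm of the dual-lattice point `2πp`, `p ∈ ℤ³`. -/
noncomputable def latNorm (p : Fin 3 → ℤ) : ℝ :=
  Real.sqrt (∑ i, (2 * Real.pi * (p i : ℝ))^2)

/-!
Since `p² + q² + (p+q)² ≥ (p+q)² + q²`, the factor `2p²` of the kernel cancels the decay
`|p|⁻²` of `η`, and with `r = p + q` each term is at most
`2C²N^{2κ-1/2} / (|r|² (|r|² + |q|²))`. On the lattice shell of sup-norm `k` there are at
most `26k²` points, all with `|r| ≥ 2πk`, so the shell contributes at most a multiple of
`1 / ((2πk)² + |q|²) ≤ (1/π) (1/(2π(k-1) + |q|) - 1/(2πk + |q|))`, and the sum over shells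
telescopes to `O(1/|q|)`: a discrete form of `∫₀^∞ dr / (r² + |q|²) = π / (2|q|)`.
-/

open Real Finset

section SupAbs

variable {ι : Type*} [Fintype ι]

def supAbs (p : ι → ℤ) : ℕ := univ.sup fun i => (p i).natAbs

lemma supAbs_eq_zero {p : ι → ℤ} : supAbs p = 0 ↔ p = 0 := by
  simp [supAbs, funext_iff]

lemma mem_Icc_neg_iff_supAbs_le [DecidableEq ι] {p : ι → ℤ} {k : ℕ} :
    p ∈ Icc (-(k : ι → ℤ)) k ↔ supAbs p ≤ k := by
  simp only [mem_Icc, Pi.le_def, supAbs, Finset.sup_le_iff, mem_univ, true_implies,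
    Pi.neg_apply, Pi.natCast_apply, ← forall_and]
  exact forall_congr' fun i => by omega

lemma mem_box_iff_supAbs_eq [DecidableEq ι] {p : ι → ℤ} {k : ℕ} : p ∈ box k ↔ supAbs p = k := by
  cases k with
  | zero => simp [supAbs_eq_zero]
  | succ k =>
    rw [box_succ_eq_sdiff, mem_sdiff, mem_Icc_neg_iff_supAbs_le, mem_Icc_neg_iff_supAbs_le]
    omega

lemma card_box_succ_pi [DecidableEq ι] (k : ℕ) :
    #(box (k + 1) : Finset (ι → ℤ)) =
      (2 * k + 3) ^ Fintype.card ι - (2 * k + 1) ^ Fintype.card ι := by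
  have hsub : Icc (-(k : ι → ℤ)) k ⊆ Icc (-(k.succ : ι → ℤ)) k.succ := fun p hp => by
    rw [mem_Icc_neg_iff_supAbs_le] at hp ⊢; omega
  rw [box_succ_eq_sdiff, card_sdiff_of_subset hsub, Pi.card_Icc, Pi.card_Icc]
  simp only [Int.card_Icc, Pi.neg_apply, Pi.natCast_apply, prod_const, card_univ]
  congr 2 <;> omega

end SupAbs

lemma card_box_succ_le (k : ℕ) : #(box (k + 1) : Finset (Fin 3 → ℤ)) ≤ 26 * (k + 1) ^ 2 := by
  rw [card_box_succ_pi, Fintype.card_fin]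
  have : (2 * k + 3) ^ 3 ≤ 26 * (k + 1) ^ 2 + (2 * k + 1) ^ 3 := by ring_nf; omega
  omega

lemma latNorm_neg (p : Fin 3 → ℤ) : latNorm (-p) = latNorm p := by
  simp [latNorm]

lemma two_pi_mul_supAbs_le_latNorm (p : Fin 3 → ℤ) : 2 * π * supAbs p ≤ latNorm p := by
  obtain ⟨i, -, hi⟩ := exists_mem_eq_sup univ univ_nonempty fun i => (p i).natAbs
  rw [supAbs, hi, latNorm]
  apply Real.le_sqrt_of_sq_le
  calc (2 * π * ((p i).natAbs : ℝ)) ^ 2 = (2 * π * (p i : ℝ)) ^ 2 := by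
        rw [Nat.cast_natAbs, Int.cast_abs, mul_pow, sq_abs, ← mul_pow]
    _ ≤ ∑ j, (2 * π * (p j : ℝ)) ^ 2 :=
        single_le_sum (f := fun j => (2 * π * (p j : ℝ)) ^ 2) (fun j _ => sq_nonneg _) (mem_univ i)

lemma latNorm_pos {p : Fin 3 → ℤ} (hp : p ≠ 0) : 0 < latNorm p := by
  have h1 : (1 : ℝ) ≤ supAbs p := by
    exact_mod_cast Nat.one_le_iff_ne_zero.2 (supAbs_eq_zero.not.2 hp)
  nlinarith [two_pi_mul_supAbs_le_latNorm p, pi_pos]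

lemma one_div_sq_add_sq_le_two_div_mul_sub {a x M : ℝ} (ha : 0 < a) (hax : a ≤ x) (hM : 0 < M) :
    1 / (x ^ 2 + M ^ 2) ≤ 2 / a * (1 / (x - a + M) - 1 / (x + M)) := by
  have hxa : 0 < x - a + M := by linarith
  have hxM : 0 < x + M := by linarith
  have hdiff : 1 / (x - a + M) - 1 / (x + M) = a / ((x - a + M) * (x + M)) := by
    field_simp; ring
  rw [hdiff, div_mul_div_comm, div_le_div_iff₀ (by positivity) (by positivity)]
  nlinarith [sq_nonneg (x - M), mul_pos ha hxa, mul_pos ha hxM]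

lemma sum_box_succ_one_div_latNorm_sq_mul_le {M : ℝ} (hM : 0 < M) (j : ℕ) :
    ∑ r ∈ box (j + 1), 1 / (latNorm r ^ 2 * (latNorm r ^ 2 + M ^ 2)) ≤
      13 / (2 * π ^ 3) * (1 / (2 * π * j + M) - 1 / (2 * π * (j + 1 : ℕ) + M)) := by
  set x : ℝ := 2 * π * (j + 1)
  have hx : 2 * π ≤ x := by have := pi_pos; nlinarith [(j.cast_nonneg : (0 : ℝ) ≤ j)]
  have hterm : ∀ r ∈ (box (j + 1) : Finset (Fin 3 → ℤ)),
      1 / (latNorm r ^ 2 * (latNorm r ^ 2 + M ^ 2)) ≤ 1 / (x ^ 2 * (x ^ 2 + M ^ 2)) := by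
    intro r hr
    have hxr : x ≤ latNorm r := by
      simpa [x, mem_box_iff_supAbs_eq.1 hr] using two_pi_mul_supAbs_le_latNorm r
    have := pi_pos
    gcongr
  calc _ ≤ #(box (j + 1)) • (1 / (x ^ 2 * (x ^ 2 + M ^ 2))) := sum_le_card_nsmul _ _ _ hterm
    _ ≤ (26 * (j + 1) ^ 2 : ℕ) * (1 / (x ^ 2 * (x ^ 2 + M ^ 2))) := by
        rw [nsmul_eq_mul]; gcongr; exact card_box_succ_le j
    _ = 13 / (2 * π ^ 2) * (1 / (x ^ 2 + M ^ 2)) := by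
        simp only [x]; push_cast; field_simp; ring
    _ ≤ 13 / (2 * π ^ 2) * (2 / (2 * π) * (1 / (x - 2 * π + M) - 1 / (x + M))) := by
        gcongr
        exact one_div_sq_add_sq_le_two_div_mul_sub (by positivity) hx hM
    _ = _ := by
        simp only [x]; push_cast
        rw [show 2 * π * (j + 1) - 2 * π + M = 2 * π * j + M by ring]
        field_simp

lemma sum_one_div_latNorm_sq_mul_le {M : ℝ} (hM : 0 < M) (t : Finset (Fin 3 → ℤ)) :
    ∑ r ∈ t, 1 / (latNorm r ^ 2 * (latNorm r ^ 2 + M ^ 2)) ≤ 13 / (2 * π ^ 3) / M := by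
  set g : (Fin 3 → ℤ) → ℝ := fun r => 1 / (latNorm r ^ 2 * (latNorm r ^ 2 + M ^ 2))
  set f : ℕ → ℝ := fun j => 1 / (2 * π * j + M)
  have hg0 : ∀ r, 0 ≤ g r := fun r => by positivity
  set K := t.sup supAbs
  have hcover : t ⊆ (range (K + 1)).biUnion box := fun r hr =>
    mem_biUnion.2 ⟨supAbs r, mem_range.2 (Nat.lt_succ_of_le (le_sup hr)),
      mem_box_iff_supAbs_eq.2 rfl⟩
  have hdisj : ((range (K + 1) : Finset ℕ) : Set ℕ).PairwiseDisjoint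
      (box : ℕ → Finset (Fin 3 → ℤ)) :=
    (disjoint_disjointed _).set_pairwise _
  calc ∑ r ∈ t, g r ≤ ∑ r ∈ (range (K + 1)).biUnion box, g r :=
        sum_le_sum_of_subset_of_nonneg hcover fun r _ _ => hg0 r
    _ = ∑ k ∈ range (K + 1), ∑ r ∈ box k, g r := sum_biUnion hdisj
    _ = ∑ j ∈ range K, ∑ r ∈ box (j + 1), g r := by
        -- the origin contributes `1 / 0 = 0`
        rw [sum_range_succ', box_zero, sum_singleton]
        simp [g, latNorm]
    _ ≤ ∑ j ∈ range K, 13 / (2 * π ^ 3) * (f j - f (j + 1)) :=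
        sum_le_sum fun j _ => sum_box_succ_one_div_latNorm_sq_mul_le hM j
    _ = 13 / (2 * π ^ 3) * (f 0 - f K) := by rw [← mul_sum, sum_range_sub']
    _ ≤ 13 / (2 * π ^ 3) / M := by
        rw [div_eq_mul_one_div _ M]
        gcongr
        simp only [f, CharP.cast_eq_zero, mul_zero, zero_add, sub_le_self_iff]
        positivity

lemma abs_le_abs_div_sq_of_le_mul_ite {x a L : ℝ} {c : Prop} [Decidable c]
    (h : |x| ≤ a / L ^ 2 * (if c then 1 else 0)) : |x| ≤ |a| / L ^ 2 := by
  refine h.trans ?_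
  split_ifs
  · rw [mul_one]
    exact div_le_div_of_nonneg_right (le_abs_self a) (sq_nonneg L)
  · rw [mul_zero]
    positivity

section Kernel

variable {N b : ℝ} {η σ : (Fin 3 → ℤ) → ℝ} {A : (Fin 3 → ℤ) → (Fin 3 → ℤ) → ℝ}

lemma abs_kernel_antidiag_le (hN : 0 ≤ N)
    (hη : ∀ p, |η p| ≤ b / latNorm p ^ 2) (hσ : ∀ q, |σ q| ≤ b / latNorm q ^ 2)
    (hA : ∀ p q, A p q = if p = 0 ∨ q = 0 then 0 else
      N ^ (-(1 : ℝ) / 2) * (2 * latNorm p ^ 2 * η p * σ q) /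
        (latNorm p ^ 2 + latNorm q ^ 2 + latNorm (p + q) ^ 2))
    (p q : Fin 3 → ℤ) :
    |A p (-p - q)| ≤ 2 * b ^ 2 * N ^ (-(1 : ℝ) / 2) *
      (1 / (latNorm (p + q) ^ 2 * (latNorm (p + q) ^ 2 + latNorm q ^ 2))) := by
  have hNa : 0 ≤ N ^ (-(1 : ℝ) / 2) := rpow_nonneg hN _
  rw [hA, show -p - q = -(p + q) by abel, show p + -(p + q) = -q by abel, latNorm_neg,
    latNorm_neg]
  split_ifs with h
  · rw [abs_zero]
    positivity
  obtain ⟨hp, hpq⟩ := not_or.1 h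
  have hLp := latNorm_pos hp
  have hLr := latNorm_pos (neg_ne_zero.1 hpq)
  have hηp : latNorm p ^ 2 * |η p| ≤ b := by
    rw [← le_div_iff₀' (by positivity)]
    exact hη p
  have hb : 0 ≤ b := (mul_nonneg (sq_nonneg _) (abs_nonneg _)).trans hηp
  have hσr : |σ (-(p + q))| ≤ b / latNorm (p + q) ^ 2 := by
    simpa only [latNorm_neg] using hσ (-(p + q))
  have hD : 0 < latNorm p ^ 2 + latNorm (p + q) ^ 2 + latNorm q ^ 2 := by
    linarith [pow_pos hLp 2, sq_nonneg (latNorm (p + q)), sq_nonneg (latNorm q)]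
  rw [abs_div, abs_of_pos hD, abs_mul, abs_of_nonneg hNa, abs_mul, abs_mul,
    abs_of_nonneg (by positivity : (0 : ℝ) ≤ 2 * latNorm p ^ 2), mul_assoc 2]
  calc N ^ (-(1 : ℝ) / 2) * (2 * (latNorm p ^ 2 * |η p|) * |σ (-(p + q))|) /
        (latNorm p ^ 2 + latNorm (p + q) ^ 2 + latNorm q ^ 2)
      ≤ N ^ (-(1 : ℝ) / 2) * (2 * b * (b / latNorm (p + q) ^ 2)) /
        (latNorm (p + q) ^ 2 + latNorm q ^ 2) := by
        gcongr
        linarith [sq_nonneg (latNorm p)]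
    _ = _ := by field_simp

lemma sum_abs_kernel_antidiag_le (hN : 0 ≤ N)
    (hη : ∀ p, |η p| ≤ b / latNorm p ^ 2) (hσ : ∀ q, |σ q| ≤ b / latNorm q ^ 2)
    (hA : ∀ p q, A p q = if p = 0 ∨ q = 0 then 0 else
      N ^ (-(1 : ℝ) / 2) * (2 * latNorm p ^ 2 * η p * σ q) /
        (latNorm p ^ 2 + latNorm q ^ 2 + latNorm (p + q) ^ 2))
    {q : Fin 3 → ℤ} (hq : q ≠ 0) (s : Finset (Fin 3 → ℤ)) :
    ∑ p ∈ s, |A p (-p - q)| ≤ 13 / π ^ 3 * b ^ 2 * N ^ (-(1 : ℝ) / 2) / latNorm q := by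
  calc ∑ p ∈ s, |A p (-p - q)|
      ≤ ∑ p ∈ s, 2 * b ^ 2 * N ^ (-(1 : ℝ) / 2) *
          (1 / (latNorm (p + q) ^ 2 * (latNorm (p + q) ^ 2 + latNorm q ^ 2))) :=
        sum_le_sum fun p _ => abs_kernel_antidiag_le hN hη hσ hA p q
    _ = 2 * b ^ 2 * N ^ (-(1 : ℝ) / 2) * ∑ r ∈ s.map (addRightEmbedding q),
          1 / (latNorm r ^ 2 * (latNorm r ^ 2 + latNorm q ^ 2)) := by
        rw [sum_map, mul_sum]
        rfl
    _ ≤ 2 * b ^ 2 * N ^ (-(1 : ℝ) / 2) * (13 / (2 * π ^ 3) / latNorm q) := by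
        gcongr
        exact sum_one_div_latNorm_sq_mul_le (latNorm_pos hq) _
    _ = 13 / π ^ 3 * b ^ 2 * N ^ (-(1 : ℝ) / 2) / latNorm q := by
        field_simp

end Kernel

theorem cubic_kernel_diag_sum_general (C κ : ℝ) :
    ∃ C' : ℝ, 0 < C' ∧ ∀ N : ℝ, 1 ≤ N →
      ∀ η σ : (Fin 3 → ℤ) → ℝ,
        (∀ p, |η p| ≤ C * N^κ / (latNorm p)^2 *
          (if N^(κ/2) ≤ latNorm p then 1 else 0)) →
        (∀ q, |σ q| ≤ C * N^κ / (latNorm q)^2 *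
          (if N^(κ/2 - (2-3*κ)/4) ≤ latNorm q then 1 else 0)) →
      ∀ A : (Fin 3 → ℤ) → (Fin 3 → ℤ) → ℝ,
        (∀ p q, A p q = if p = 0 ∨ q = 0 then 0 else
          N^(-(1:ℝ)/2) * (2 * (latNorm p)^2 * η p * σ q) /
            ((latNorm p)^2 + (latNorm q)^2 + (latNorm (p+q))^2)) →
      ∀ q : Fin 3 → ℤ, q ≠ 0 →
        ∑' p : Fin 3 → ℤ, |A p (-p - q)| ≤ C' * N^(2*κ - 1/2) / latNorm q := by
  refine ⟨C ^ 2 + 1, by positivity, fun N hN η σ hη hσ A hA q hq => ?_⟩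
  have hN0 : 0 < N := by linarith
  have hM := latNorm_pos hq
  have hpow : |C * N ^ κ| ^ 2 * N ^ (-(1 : ℝ) / 2) = C ^ 2 * N ^ (2 * κ - 1 / 2) := by
    rw [sq_abs, mul_pow, mul_assoc, sq (N ^ κ), ← rpow_add hN0, ← rpow_add hN0]
    ring_nf
  have hπ : 13 / π ^ 3 ≤ 1 := by
    rw [div_le_one (by positivity)]
    nlinarith [pi_gt_three, sq_nonneg π]
  refine tsum_le_of_sum_le' (by positivity) fun s => ?_
  calc ∑ p ∈ s, |A p (-p - q)|
      ≤ 13 / π ^ 3 * |C * N ^ κ| ^ 2 * N ^ (-(1 : ℝ) / 2) / latNorm q :=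
        sum_abs_kernel_antidiag_le hN0.le (fun p => abs_le_abs_div_sq_of_le_mul_ite (hη p))
          (fun q => abs_le_abs_div_sq_of_le_mul_ite (hσ q)) hA hq s
    _ = 13 / π ^ 3 * C ^ 2 * N ^ (2 * κ - 1 / 2) / latNorm q := by
        rw [mul_assoc _ (_ ^ 2), hpow, mul_assoc]
    _ ≤ (C ^ 2 + 1) * N ^ (2 * κ - 1 / 2) / latNorm q := by
        gcongr
        nlinarith [sq_nonneg C]

/-- With `|η_p| ≤ CN^κ|p|^{-2}1(|p| ≥ N^{κ/2})`,
`|σ_q| ≤ CN^κ|q|^{-2}1(|q| ≥ N^{κ/2-β/4})` (`β = 2-3κ`), and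
`A_{p,q} = N^{-1/2}·2p²η_pσ_q/(p²+q²+(p+q)²)`, one has for every `q ≠ 0`
`∑_p |A_{p,-p-q}| ≤ C' N^{2κ-1/2} |q|^{-1}` with `C'` depending only on `C` and `κ`. -/
theorem cubic_kernel_diag_sum (C κ : ℝ) (hC : 0 < C) (hκ1 : 1/2 < κ) (hκ2 : κ < 2/3) :
    ∃ C' : ℝ, 0 < C' ∧ ∀ N : ℝ, 1 ≤ N →
      ∀ η σ : (Fin 3 → ℤ) → ℝ,
        (∀ p, |η p| ≤ C * N^κ / (latNorm p)^2 *
          (if N^(κ/2) ≤ latNorm p then 1 else 0)) →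
        (∀ q, |σ q| ≤ C * N^κ / (latNorm q)^2 *
          (if N^(κ/2 - (2-3*κ)/4) ≤ latNorm q then 1 else 0)) →
      ∀ A : (Fin 3 → ℤ) → (Fin 3 → ℤ) → ℝ,
        (∀ p q, A p q = if p = 0 ∨ q = 0 then 0 else
          N^(-(1:ℝ)/2) * (2 * (latNorm p)^2 * η p * σ q) /
            ((latNorm p)^2 + (latNorm q)^2 + (latNorm (p+q))^2)) →
      ∀ q : Fin 3 → ℤ, q ≠ 0 →
        ∑' p : Fin 3 → ℤ, |A p (-p - q)| ≤ C' * N^(2*κ - 1/2) / latNorm q :=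
  cubic_kernel_diag_sum_general C κ
end
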